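/- Let 1 ≤ d < n and let Δ be a pure (d−1)-dimensional simplicial complex on [n] whose facet set is a nonempty proper subset of [n]_d. Then Δ is a strong f-simplicial complex if and only if Δ^c is a strong f-simplicial complex. -/

import Mathlib

open Finset

/-- `Δ`, given as the finset of its faces, is a simplicial complex on the vertex
set `Fin n`: a nonempty collection of subsets closed under taking subsets. -/
def IsComplex {n : ℕ} (Δ : Finset (Finset (Fin n))) : Prop :=
  Δ.Nonempty ∧ ∀ A ∈ Δ, ∀ B ⊆ A, B ∈ Δ

/-- The facets (maximal faces) of `Δ`. -/
def facets {n : ℕ} (Δ : Finset (Finset (Fin n))) : Finset (Finset (Fin n)) :=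
  Δ.filter fun F => ∀ G ∈ Δ, F ⊆ G → F = G

/-- The simplicial complex generated by a family `𝔉`: all subsets of members of `𝔉`. -/
def generated {n : ℕ} (𝔉 : Finset (Finset (Fin n))) : Finset (Finset (Fin n)) :=
  univ.filter fun A => ∃ F ∈ 𝔉, A ⊆ F

/-- The Newton complement dual `Δ^c`: the complex generated by the complements
of the facets of `Δ`. -/
def cdual {n : ℕ} (Δ : Finset (Finset (Fin n))) : Finset (Finset (Fin n)) :=
  generated ((facets Δ).image fun F => Fᶜ)

/-- The nonface complex of `Δ`: all subsets of `[n]` containing no facet of `Δ`. -/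
def nonfaceComplex {n : ℕ} (Δ : Finset (Finset (Fin n))) : Finset (Finset (Fin n)) :=
  univ.filter fun A => ∀ F ∈ facets Δ, ¬ F ⊆ A

/-- `Δ` is an `f`-simplicial complex: for every `k`, `Δ` and its nonface complex
have the same number of `k`-element members (the same `f`-vector). -/
def IsFComplex {n : ℕ} (Δ : Finset (Finset (Fin n))) : Prop :=
  ∀ k : ℕ, (Δ.filter fun A => A.card = k).card =
    ((nonfaceComplex Δ).filter fun A => A.card = k).card

/-- `Δ` is pure `(d-1)`-dimensional: every facet has exactly `d` elements. -/
def PureDim {n : ℕ} (d : ℕ) (Δ : Finset (Finset (Fin n))) : Prop :=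
  ∀ F ∈ facets Δ, F.card = d

/-- The minimal nonfaces of `Δ`: sets that are not faces but all of whose proper
subsets are faces. -/
def minNonfaces {n : ℕ} (Δ : Finset (Finset (Fin n))) : Finset (Finset (Fin n)) :=
  univ.filter fun A => A ∉ Δ ∧ ∀ B ⊂ A, B ∈ Δ

/-- The Alexander dual `Δ^∨`: the complex whose facets are the complements of the
minimal nonfaces of `Δ`. -/
def adual {n : ℕ} (Δ : Finset (Finset (Fin n))) : Finset (Finset (Fin n)) :=
  generated ((minNonfaces Δ).image fun F => Fᶜ)

/-- The homogeneous complement `Δ'` (in degree `e`): the complex generated by the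
`e`-element subsets of `[n]` that are not facets of `Δ`. -/
def hcompl {n : ℕ} (e : ℕ) (Δ : Finset (Finset (Fin n))) : Finset (Finset (Fin n)) :=
  generated (univ.filter fun A : Finset (Fin n) => A.card = e ∧ A ∉ facets Δ)

/-- `Δ` (pure of dimension `e - 1`) is strong: both `Δ` and its homogeneous complement
`Δ'` (in degree `e`) are `f`-simplicial complexes. -/
def IsStrong {n : ℕ} (e : ℕ) (Δ : Finset (Finset (Fin n))) : Prop :=
  IsFComplex Δ ∧ IsFComplex (hcompl e Δ)

/-! Complementation `A ↦ Aᶜ` matches the `k`-subsets of `[n]` with the `(n - k)`-subsets.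
A `k`-set is a face of `Δ^c` iff its complement is not in the nonface complex `N(Δ)`, and it
lies in `N(Δ^c)` iff its complement is not a face of `Δ`. Hence
`f_k(Δ^c) + f_{n-k}(N(Δ)) = C(n, k) = f_k(N(Δ^c)) + f_{n-k}(Δ)`, so `Δ^c` is `f`-simplicial
iff `Δ` is. Moreover `(Δ^c)' = (Δ')^c`: both are generated by the complements of the
`d`-sets that are not facets of `Δ`. -/

variable {n : ℕ}

@[simp] lemma mem_generated {𝔉 : Finset (Finset (Fin n))} {A : Finset (Fin n)} :
    A ∈ generated 𝔉 ↔ ∃ F ∈ 𝔉, A ⊆ F := by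
  simp [generated]

lemma mem_facets {Δ : Finset (Finset (Fin n))} {A : Finset (Fin n)} :
    A ∈ facets Δ ↔ A ∈ Δ ∧ ∀ G ∈ Δ, A ⊆ G → A = G :=
  mem_filter

@[simp] lemma mem_nonfaceComplex {Δ : Finset (Finset (Fin n))} {A : Finset (Fin n)} :
    A ∈ nonfaceComplex Δ ↔ ∀ F ∈ facets Δ, ¬ F ⊆ A := by
  simp [nonfaceComplex]

lemma isLowerSet_generated (𝔉 : Finset (Finset (Fin n))) :
    IsLowerSet (generated 𝔉 : Set (Finset (Fin n))) := by
  rintro A B hBA hA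
  obtain ⟨F, hF, hAF⟩ := mem_generated.1 hA
  exact mem_generated.2 ⟨F, hF, hBA.trans hAF⟩

lemma isAntichain_facets (Δ : Finset (Finset (Fin n))) :
    IsAntichain (· ≤ ·) (facets Δ : Set (Finset (Fin n))) :=
  fun _ hF G hG hne hFG => hne ((mem_facets.1 hF).2 G (mem_facets.1 hG).1 hFG)

lemma facets_generated {𝔉 : Finset (Finset (Fin n))}
    (h𝔉 : IsAntichain (· ≤ ·) (𝔉 : Set (Finset (Fin n)))) : facets (generated 𝔉) = 𝔉 := by
  ext A
  simp only [mem_facets, mem_generated]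
  constructor
  · rintro ⟨⟨F, hF, hAF⟩, hmax⟩
    rwa [hmax F ⟨F, hF, Subset.rfl⟩ hAF]
  · intro hA
    refine ⟨⟨A, hA, Subset.rfl⟩, fun G ⟨F, hF, hGF⟩ hAG => ?_⟩
    have hAF : A = F := h𝔉.eq hA hF (hAG.trans hGF)
    exact subset_antisymm hAG (hAF ▸ hGF)

lemma generated_facets {Δ : Finset (Finset (Fin n))}
    (hΔ : IsLowerSet (Δ : Set (Finset (Fin n)))) : generated (facets Δ) = Δ := by
  ext A
  rw [mem_generated]
  constructor
  · rintro ⟨F, hF, hAF⟩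
    exact hΔ hAF (mem_facets.1 hF).1
  · intro hA
    obtain ⟨F, hF, hmax⟩ :=
      exists_max_image {G ∈ Δ | A ⊆ G} card ⟨A, mem_filter.2 ⟨hA, Subset.rfl⟩⟩
    rw [mem_filter] at hF
    refine ⟨F, mem_facets.2 ⟨hF.1, fun G hG hFG => ?_⟩, hF.2⟩
    exact eq_of_subset_of_card_le hFG (hmax G (mem_filter.2 ⟨hG, hF.2.trans hFG⟩))

lemma facets_cdual (Δ : Finset (Finset (Fin n))) :
    facets (cdual Δ) = (facets Δ).image compl := by
  apply facets_generated
  rw [coe_image]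
  exact (isAntichain_facets Δ).image_compl

lemma mem_cdual {Δ : Finset (Finset (Fin n))} {A : Finset (Fin n)} :
    A ∈ cdual Δ ↔ Aᶜ ∉ nonfaceComplex Δ := by
  simp only [cdual, mem_generated, exists_mem_image, mem_nonfaceComplex, not_forall, not_not,
    exists_prop, subset_compl_comm]

lemma mem_nonfaceComplex_cdual {Δ : Finset (Finset (Fin n))}
    (hΔ : IsLowerSet (Δ : Set (Finset (Fin n)))) {A : Finset (Fin n)} :
    A ∈ nonfaceComplex (cdual Δ) ↔ Aᶜ ∉ Δ := by
  conv_rhs => rw [← generated_facets hΔ]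
  simp only [mem_nonfaceComplex, facets_cdual, forall_mem_image, mem_generated, not_exists,
    not_and]
  exact forall₂_congr fun F _ => by rw [← compl_subset_compl (t := Aᶜ), compl_compl]

lemma card_compl_mem_eq_card (S : Finset (Finset (Fin n))) {k : ℕ} (hk : k ≤ n) :
    #{A | A.card = k ∧ Aᶜ ∈ S} = #{B ∈ S | B.card = n - k} := by
  apply card_nbij' compl compl
  · intro A hA
    simp only [coe_filter, mem_univ, true_and, Set.mem_ofPred_eq] at hA ⊢
    exact ⟨hA.2, by rw [card_compl, Fintype.card_fin, hA.1]⟩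
  · intro B hB
    simp only [coe_filter, mem_univ, true_and, Set.mem_ofPred_eq, compl_compl] at hB ⊢
    refine ⟨?_, hB.1⟩
    have := card_le_univ B
    rw [card_compl, Fintype.card_fin, hB.2]
    omega
  · intro A _; exact compl_compl A
  · intro B _; exact compl_compl B

lemma card_compl_notMem_add_card (S : Finset (Finset (Fin n))) {k : ℕ} (hk : k ≤ n) :
    #{A | A.card = k ∧ Aᶜ ∉ S} + #{B ∈ S | B.card = n - k} = n.choose k := by
  have hsplit := card_filter_add_card_filter_not (s := powersetCard k univ) (· ᶜ ∈ S)
  rw [card_powersetCard, card_univ, Fintype.card_fin, powersetCard_eq_filter, powerset_univ,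
    filter_filter, filter_filter] at hsplit
  rw [← card_compl_mem_eq_card S hk, ← hsplit, add_comm]

lemma card_cdual_add_card_nonfaceComplex (Δ : Finset (Finset (Fin n))) {k : ℕ} (hk : k ≤ n) :
    #{A ∈ cdual Δ | A.card = k} + #{B ∈ nonfaceComplex Δ | B.card = n - k} = n.choose k := by
  rw [← card_compl_notMem_add_card _ hk]
  congr 2
  ext A
  simp [mem_cdual, and_comm]

lemma card_nonfaceComplex_cdual_add_card {Δ : Finset (Finset (Fin n))}
    (hΔ : IsLowerSet (Δ : Set (Finset (Fin n)))) {k : ℕ} (hk : k ≤ n) :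
    #{A ∈ nonfaceComplex (cdual Δ) | A.card = k} + #{B ∈ Δ | B.card = n - k} = n.choose k := by
  rw [← card_compl_notMem_add_card _ hk]
  congr 2
  ext A
  simp [mem_nonfaceComplex_cdual hΔ, and_comm]

lemma isFComplex_iff_forall_le {Δ : Finset (Finset (Fin n))} :
    IsFComplex Δ ↔ ∀ k ≤ n, #{A ∈ Δ | A.card = k} = #{A ∈ nonfaceComplex Δ | A.card = k} := by
  refine ⟨fun h k _ => h k, fun h k => ?_⟩
  by_cases hk : k ≤ n
  · exact h k hk
  · have hempty (S : Finset (Finset (Fin n))) : {A ∈ S | A.card = k} = ∅ :=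
      filter_false_of_mem fun A _ => by have := card_le_univ A; rw [Fintype.card_fin] at this; omega
    rw [hempty, hempty]

lemma isFComplex_cdual_iff {Δ : Finset (Finset (Fin n))}
    (hΔ : IsLowerSet (Δ : Set (Finset (Fin n)))) : IsFComplex (cdual Δ) ↔ IsFComplex Δ := by
  have hreflect : ∀ k ≤ n,
      #{A ∈ cdual Δ | A.card = k} = #{A ∈ nonfaceComplex (cdual Δ) | A.card = k} ↔
        #{A ∈ Δ | A.card = n - k} = #{A ∈ nonfaceComplex Δ | A.card = n - k} := by
    intro k hk
    have h₁ := card_cdual_add_card_nonfaceComplex Δ hk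
    have h₂ := card_nonfaceComplex_cdual_add_card hΔ hk
    omega
  rw [isFComplex_iff_forall_le, isFComplex_iff_forall_le]
  refine ⟨fun h k hk => ?_, fun h k hk => (hreflect k hk).2 (h _ (Nat.sub_le n k))⟩
  simpa [Nat.sub_sub_self hk] using (hreflect (n - k) (Nat.sub_le n k)).1 (h _ (Nat.sub_le n k))

lemma mem_image_compl {𝔉 : Finset (Finset (Fin n))} {A : Finset (Fin n)} :
    A ∈ 𝔉.image compl ↔ Aᶜ ∈ 𝔉 := by
  rw [mem_image]
  exact ⟨fun ⟨F, hF, hFA⟩ => hFA ▸ (compl_compl F).symm ▸ hF, fun hA => ⟨Aᶜ, hA, compl_compl A⟩⟩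

lemma facets_hcompl (e : ℕ) (Δ : Finset (Finset (Fin n))) :
    facets (hcompl e Δ) = univ.filter fun A => A.card = e ∧ A ∉ facets Δ := by
  refine facets_generated (Set.Sized.isAntichain (r := e) fun A hA => ?_)
  exact (mem_filter.1 hA).2.1

lemma hcompl_cdual {d : ℕ} (hd : d ≤ n) (Δ : Finset (Finset (Fin n))) :
    hcompl (n - d) (cdual Δ) = cdual (hcompl d Δ) := by
  rw [hcompl, facets_cdual, cdual, facets_hcompl]
  congr 1
  ext A
  have := card_le_univ A
  simp only [mem_filter, mem_univ, true_and, mem_image_compl, card_compl,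
    Fintype.card_fin] at this ⊢
  exact and_congr_left fun _ => by omega

theorem stmt6_general {n d : ℕ} (hdn : d < n)
    (Δ : Finset (Finset (Fin n))) (hΔ : IsComplex Δ) :
    IsStrong d Δ ↔ IsStrong (n - d) (cdual Δ) := by
  have hlower : IsLowerSet (Δ : Set (Finset (Fin n))) := fun A B hBA hA => hΔ.2 A hA B hBA
  rw [IsStrong, IsStrong, hcompl_cdual hdn.le, isFComplex_cdual_iff hlower,
    isFComplex_cdual_iff (Δ := hcompl d Δ) (isLowerSet_generated _)]

/-- for a pure `(d-1)`-dimensional complex `Δ` on `[n]` whose facet set is a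
nonempty proper subfamily of the `d`-element subsets, `Δ` is a strong `f`-simplicial
complex iff `Δ^c` (which is pure `(n-d-1)`-dimensional) is. -/
theorem stmt6 {n d : ℕ} (hd : 1 ≤ d) (hdn : d < n)
    (Δ : Finset (Finset (Fin n))) (hΔ : IsComplex Δ) (hpure : PureDim d Δ)
    (hne : (facets Δ).Nonempty)
    (hproper : ∃ A : Finset (Fin n), A.card = d ∧ A ∉ facets Δ) :
    IsStrong d Δ ↔ IsStrong (n - d) (cdual Δ) :=
  stmt6_general hdn Δ hΔ
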